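/- arXiv:1012.5687 — 7 statements merged into one kernel-verified Lean document; each statement's English description precedes it below -/
import Mathlib

section
/- (Wasserstein distance separates measures) Let (E, ρ) be a complete separable (Polish) metric space with its Borel σ-algebra and let p ≥ 1. If μ and ν are probability measures on E with W_p^ρ(μ,ν) = 0, i.e. inf_{π ∈ C(μ,ν)} ∫_{E×E} ρ(x,y)^p dπ(x,y) = 0, then μ = ν. -/
/-!
A coupling of cost `< ε ^ p * ε` moves mass a distance `≥ ε` only on a set of measure `< ε`
(Markov's inequality), so for closed `F` we get `μ F ≤ ν (cthickening ε F) + ε`, and letting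
`ε → 0` gives `μ F ≤ ν F`. The cost is symmetric under swapping the factors, so also
`ν F ≤ μ F`; closed sets form a π-system generating the Borel σ-algebra, hence `μ = ν`.
-/

open MeasureTheory Metric Filter Topology ENNReal

namespace MeasureTheory

variable {E : Type*} [PseudoMetricSpace E] [MeasurableSpace E]

/-- The `p`-th power `W_p(μ, ν) ^ p` of the Wasserstein distance. -/
noncomputable def transportCost (p : ℝ) (μ ν : Measure E) : ℝ≥0∞ :=
  ⨅ π : {π : Measure (E × E) // π.map Prod.fst = μ ∧ π.map Prod.snd = ν},
    ∫⁻ z, ENNReal.ofReal (dist z.1 z.2 ^ p) ∂π.1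

theorem transportCost_le_swap (p : ℝ) (μ ν : Measure E) :
    transportCost p ν μ ≤ transportCost p μ ν := by
  let swap : E × E ≃ᵐ E × E := MeasurableEquiv.prodComm
  have hswap : ⇑swap = Prod.swap := rfl
  refine le_iInf fun ⟨π, hπ₁, hπ₂⟩ => iInf_le_of_le ⟨π.map swap, ?_, ?_⟩ ?_
  · rwa [hswap, Measure.map_map measurable_fst measurable_swap]
  · rwa [hswap, Measure.map_map measurable_snd measurable_swap]
  · rw [lintegral_map_equiv]
    exact (lintegral_congr fun z => by rw [hswap, Prod.fst_swap, Prod.snd_swap, dist_comm]).le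

theorem transportCost_comm (p : ℝ) (μ ν : Measure E) :
    transportCost p μ ν = transportCost p ν μ :=
  le_antisymm (transportCost_le_swap p ν μ) (transportCost_le_swap p μ ν)

variable [OpensMeasurableSpace E]

theorem ofReal_rpow_mul_measure_le_lintegral {p ε : ℝ} (hp : 0 < p) (hε : 0 ≤ ε)
    (π : Measure (E × E)) {F : Set E} (hF : IsClosed F) :
    ENNReal.ofReal (ε ^ p) * π (Prod.fst ⁻¹' F \ Prod.snd ⁻¹' cthickening ε F) ≤
      ∫⁻ z, ENNReal.ofReal (dist z.1 z.2 ^ p) ∂π := by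
  have hS : MeasurableSet (Prod.fst ⁻¹' F \ Prod.snd ⁻¹' cthickening ε F : Set (E × E)) :=
    (measurable_fst hF.measurableSet).diff (measurable_snd isClosed_cthickening.measurableSet)
  rw [← lintegral_indicator_const hS]
  refine lintegral_mono (Set.indicator_le fun z hz => ?_)
  obtain ⟨hx, hy⟩ := hz
  have hfar : ε ≤ dist z.1 z.2 := by
    by_contra! hnear
    exact hy (mem_cthickening_of_dist_le _ _ _ _ hx (by rw [dist_comm]; exact hnear.le))
  exact ENNReal.ofReal_le_ofReal (Real.rpow_le_rpow hε hfar hp.le)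

theorem measure_le_measure_cthickening_add_of_transportCost_eq_zero {p ε : ℝ} (hp : 0 < p)
    (hε : 0 < ε) {μ ν : Measure E} (h : transportCost p μ ν = 0) {F : Set E}
    (hF : IsClosed F) : μ F ≤ ν (cthickening ε F) + ENNReal.ofReal ε := by
  have hεp : ENNReal.ofReal (ε ^ p) ≠ 0 := by simpa using Real.rpow_pos_of_pos hε p
  have hpos : 0 < ENNReal.ofReal (ε ^ p) * ENNReal.ofReal ε :=
    ENNReal.mul_pos hεp (by simpa using hε)
  rw [← h, transportCost] at hpos
  obtain ⟨⟨π, rfl, rfl⟩, hcost⟩ := iInf_lt_iff.mp hpos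
  have hfar : π (Prod.fst ⁻¹' F \ Prod.snd ⁻¹' cthickening ε F) ≤ ENNReal.ofReal ε :=
    ((ENNReal.mul_lt_mul_iff_right hεp ofReal_ne_top).mp
      ((ofReal_rpow_mul_measure_le_lintegral hp hε.le π hF).trans_lt hcost)).le
  rw [Measure.map_apply measurable_fst hF.measurableSet,
    Measure.map_apply measurable_snd isClosed_cthickening.measurableSet]
  calc π (Prod.fst ⁻¹' F)
      ≤ π (Prod.snd ⁻¹' cthickening ε F ∪ (Prod.fst ⁻¹' F \ Prod.snd ⁻¹' cthickening ε F)) :=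
        measure_mono fun z hz => (em _).imp_right fun hy => ⟨hz, hy⟩
    _ ≤ _ := (measure_union_le _ _).trans (by gcongr)

theorem measure_le_of_transportCost_eq_zero {p : ℝ} (hp : 0 < p) {μ ν : Measure E}
    [IsFiniteMeasure ν] (h : transportCost p μ ν = 0) {F : Set E} (hF : IsClosed F) :
    μ F ≤ ν F := by
  have hlim : Tendsto (fun ε => ν (cthickening ε F) + ENNReal.ofReal ε) (𝓝[>] 0)
      (𝓝 (ν F)) := by
    simpa using ((tendsto_measure_cthickening_of_isClosed
      ⟨1, one_pos, measure_ne_top ν _⟩ hF).add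
      (ENNReal.continuous_ofReal.tendsto' 0 0 ofReal_zero)).mono_left nhdsWithin_le_nhds
  refine ge_of_tendsto hlim ?_
  filter_upwards [self_mem_nhdsWithin] with ε hε using
    measure_le_measure_cthickening_add_of_transportCost_eq_zero hp hε h hF

end MeasureTheory

theorem eq_of_wasserstein_eq_zero_general {E : Type*} [MetricSpace E]
    [MeasurableSpace E] [BorelSpace E]
    (p : ℝ) (hp : 1 ≤ p)
    (μ ν : Measure E) [IsProbabilityMeasure μ] [IsProbabilityMeasure ν]
    (h : (⨅ π : {π : Measure (E × E) // π.map Prod.fst = μ ∧ π.map Prod.snd = ν},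
        ∫⁻ z, ENNReal.ofReal (dist z.1 z.2 ^ p) ∂π.1) = 0) :
    μ = ν := by
  have hp₀ : 0 < p := zero_lt_one.trans_le hp
  have hμν : transportCost p μ ν = 0 := h
  have hνμ : transportCost p ν μ = 0 := transportCost_comm p μ ν ▸ hμν
  have hclosed : ∀ F : Set E, IsClosed F → μ F = ν F := fun F hF =>
    (measure_le_of_transportCost_eq_zero hp₀ hμν hF).antisymm
      (measure_le_of_transportCost_eq_zero hp₀ hνμ hF)
  refine ext_of_generate_finite _ ?_ isPiSystem_isClosed hclosed (hclosed _ isClosed_univ)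
  rw [BorelSpace.measurable_eq (α := E), borel_eq_generateFrom_isClosed]

/-- **The Wasserstein distance separates measures.** On a Polish space, for `p ≥ 1`, if the
infimum over all couplings `π` of `μ` and `ν` of `∫ dist(x,y)^p dπ` is `0`, then `μ = ν`. -/
theorem eq_of_wasserstein_eq_zero {E : Type*} [MetricSpace E] [CompleteSpace E]
    [TopologicalSpace.SeparableSpace E] [MeasurableSpace E] [BorelSpace E]
    (p : ℝ) (hp : 1 ≤ p)
    (μ ν : Measure E) [IsProbabilityMeasure μ] [IsProbabilityMeasure ν]
    (h : (⨅ π : {π : Measure (E × E) // π.map Prod.fst = μ ∧ π.map Prod.snd = ν},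
        ∫⁻ z, ENNReal.ofReal (dist z.1 z.2 ^ p) ∂π.1) = 0) :
    μ = ν :=
  eq_of_wasserstein_eq_zero_general p hp μ ν h
end

section
/- (Total variation as optimal transportation cost for the discrete metric) Let E be a complete separable (Polish) metric space with its Borel σ-algebra and let μ, ν be probability measures on E. Then inf_{π ∈ C(μ,ν)} π({(x,y) ∈ E×E : x ≠ y}) = sup_{A measurable} |μ(A) − ν(A)|. -/
open MeasureTheory

section Aux

variable {E : Type*} [MetricSpace E] [CompleteSpace E]
    [TopologicalSpace.SeparableSpace E] [MeasurableSpace E] [BorelSpace E]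

lemma tv_measurable_offdiag : MeasurableSet {z : E × E | z.1 ≠ z.2} := by
  have : IsClosed {z : E × E | z.1 = z.2} := isClosed_eq continuous_fst continuous_snd
  exact (this.isOpen_compl).measurableSet

/-- Lower bound: for any coupling and measurable A, `μ A - ν A ≤ π {x ≠ y}`. -/
lemma tv_coupling_lower (μ ν : Measure E) (π : Measure (E × E))
    (h1 : π.map Prod.fst = μ) (h2 : π.map Prod.snd = ν)
    {A : Set E} (hA : MeasurableSet A) :
    μ A - ν A ≤ π {z : E × E | z.1 ≠ z.2} := by
  have hμA : μ A = π (Prod.fst ⁻¹' A) := by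
    rw [← h1, Measure.map_apply measurable_fst hA]
  have hνA : ν A = π (Prod.snd ⁻¹' A) := by
    rw [← h2, Measure.map_apply measurable_snd hA]
  rw [hμA, hνA, tsub_le_iff_right]
  have hsub : Prod.fst ⁻¹' A ⊆ {z : E × E | z.1 ≠ z.2} ∪ Prod.snd ⁻¹' A := by
    intro z hz
    by_cases h : z.1 = z.2
    · exact Or.inr (by simpa [Set.mem_preimage, ← h] using hz)
    · exact Or.inl h
  calc π (Prod.fst ⁻¹' A) ≤ π ({z : E × E | z.1 ≠ z.2} ∪ Prod.snd ⁻¹' A) := measure_mono hsub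
    _ ≤ π {z : E × E | z.1 ≠ z.2} + π (Prod.snd ⁻¹' A) := measure_union_le _ _

lemma tv_coupling_lower' (μ ν : Measure E) (π : Measure (E × E))
    (h1 : π.map Prod.fst = μ) (h2 : π.map Prod.snd = ν)
    {A : Set E} (hA : MeasurableSet A) :
    ν A - μ A ≤ π {z : E × E | z.1 ≠ z.2} := by
  have hμA : μ A = π (Prod.fst ⁻¹' A) := by
    rw [← h1, Measure.map_apply measurable_fst hA]
  have hνA : ν A = π (Prod.snd ⁻¹' A) := by
    rw [← h2, Measure.map_apply measurable_snd hA]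
  rw [hμA, hνA, tsub_le_iff_right]
  have hsub : Prod.snd ⁻¹' A ⊆ {z : E × E | z.1 ≠ z.2} ∪ Prod.fst ⁻¹' A := by
    intro z hz
    by_cases h : z.1 = z.2
    · exact Or.inr (by simpa [Set.mem_preimage, h] using hz)
    · exact Or.inl h
  calc π (Prod.snd ⁻¹' A) ≤ π ({z : E × E | z.1 ≠ z.2} ∪ Prod.fst ⁻¹' A) := measure_mono hsub
    _ ≤ π {z : E × E | z.1 ≠ z.2} + π (Prod.fst ⁻¹' A) := measure_union_le _ _

end Aux

/-- **Total variation as optimal transportation cost for the discrete metric.** On a Polish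
space, for probability measures `μ`, `ν`, the infimum of `π({x ≠ y})` over all couplings `π`
of `μ` and `ν` equals `sup_A |μ(A) − ν(A)|` over measurable sets `A`. -/
theorem total_variation_eq_inf_coupling {E : Type*} [MetricSpace E] [CompleteSpace E]
    [TopologicalSpace.SeparableSpace E] [MeasurableSpace E] [BorelSpace E]
    (μ ν : Measure E) [IsProbabilityMeasure μ] [IsProbabilityMeasure ν] :
    (⨅ π : {π : Measure (E × E) // π.map Prod.fst = μ ∧ π.map Prod.snd = ν},
        π.1 {z : E × E | z.1 ≠ z.2}) =
      ⨆ (A : Set E) (_ : MeasurableSet A), max (μ A - ν A) (ν A - μ A) := by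
  obtain ⟨S, hS, hS1, hS2⟩ := hahn_decomposition (μ := μ) (ν := ν)
  -- decompose
  have hrle1 : ν.restrict S ≤ μ.restrict S := by
    refine Measure.le_iff.2 fun t ht => ?_
    rw [Measure.restrict_apply ht, Measure.restrict_apply ht]
    exact hS1 _ (ht.inter hS) Set.inter_subset_right
  have hrle2 : μ.restrict Sᶜ ≤ ν.restrict Sᶜ := by
    refine Measure.le_iff.2 fun t ht => ?_
    rw [Measure.restrict_apply ht, Measure.restrict_apply ht]
    exact hS2 _ (ht.inter hS.compl) Set.inter_subset_right
  set α : Measure E := μ.restrict S - ν.restrict S with hα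
  set β : Measure E := ν.restrict Sᶜ - μ.restrict Sᶜ with hβ
  set lam : Measure E := ν.restrict S + μ.restrict Sᶜ with hlam
  have hμdec : lam + α = μ := by
    have h1 : α + ν.restrict S = μ.restrict S := Measure.sub_add_cancel_of_le hrle1
    have h2 : lam + α = μ.restrict S + μ.restrict Sᶜ := by rw [hlam, ← h1]; abel
    rw [h2, Measure.restrict_add_restrict_compl hS]
  have hνdec : lam + β = ν := by
    have h1 : β + μ.restrict Sᶜ = ν.restrict Sᶜ := Measure.sub_add_cancel_of_le hrle2
    have h2 : lam + β = ν.restrict S + ν.restrict Sᶜ := by rw [hlam, ← h1]; abel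
    rw [h2, Measure.restrict_add_restrict_compl hS]
  haveI : IsFiniteMeasure α := isFiniteMeasure_of_le _ (Measure.sub_le.trans Measure.restrict_le_self)
  haveI : IsFiniteMeasure β := isFiniteMeasure_of_le _ (Measure.sub_le.trans Measure.restrict_le_self)
  haveI : IsFiniteMeasure lam := by
    constructor
    rw [hlam, Measure.add_apply]
    exact ENNReal.add_lt_top.2 ⟨(measure_mono (Set.subset_univ _)).trans_lt
        ((Measure.restrict_le_self Set.univ).trans_lt (measure_lt_top ν _)),
      (measure_mono (Set.subset_univ _)).trans_lt
        ((Measure.restrict_le_self Set.univ).trans_lt (measure_lt_top μ _))⟩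
  set d : ENNReal := α Set.univ with hd
  have hαSc : α Sᶜ = 0 := by
    have : α Sᶜ ≤ (μ.restrict S) Sᶜ := Measure.le_iff'.1 Measure.sub_le Sᶜ
    rw [Measure.restrict_apply hS.compl] at this
    simpa using this
  have hβS : β S = 0 := by
    have : β S ≤ (ν.restrict Sᶜ) S := Measure.le_iff'.1 Measure.sub_le S
    rw [Measure.restrict_apply hS] at this
    simpa using this
  have hαS : α S = d := by
    have := measure_add_measure_compl (μ := α) hS
    rw [hαSc, add_zero] at this
    exact this
  have hβSc : β Sᶜ = β Set.univ := by
    have := measure_add_measure_compl (μ := β) hS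
    rw [hβS, zero_add] at this
    exact this
  -- β univ = d
  have hβuniv : β Set.univ = d := by
    have h1 : lam Set.univ + α Set.univ = 1 := by
      rw [← Measure.add_apply, hμdec]; exact measure_univ
    have h2 : lam Set.univ + β Set.univ = 1 := by
      rw [← Measure.add_apply, hνdec]; exact measure_univ
    have := h1.trans h2.symm
    exact (ENNReal.add_right_inj (measure_ne_top lam _)).1 this |>.symm
  have hd_ne_top : d ≠ ⊤ := measure_ne_top α _
  -- sup = d
  have hsup : (⨆ (A : Set E) (_ : MeasurableSet A), max (μ A - ν A) (ν A - μ A)) = d := by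
    apply le_antisymm
    · refine iSup₂_le fun A hA => max_le ?_ ?_
      · have h1 : μ A = lam A + α A := by rw [← hμdec, Measure.add_apply]
        have h2 : lam A ≤ ν A := by
          rw [← hνdec, Measure.add_apply]; exact le_self_add
        calc μ A - ν A ≤ lam A + α A - lam A := by
              rw [h1]; exact tsub_le_tsub le_rfl h2
          _ = α A := by rw [ENNReal.add_sub_cancel_left (measure_ne_top lam _)]
          _ ≤ d := measure_mono (Set.subset_univ _)
      · have h1 : ν A = lam A + β A := by rw [← hνdec, Measure.add_apply]
        have h2 : lam A ≤ μ A := by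
          rw [← hμdec, Measure.add_apply]; exact le_self_add
        calc ν A - μ A ≤ lam A + β A - lam A := by
              rw [h1]; exact tsub_le_tsub le_rfl h2
          _ = β A := by rw [ENNReal.add_sub_cancel_left (measure_ne_top lam _)]
          _ ≤ β Set.univ := measure_mono (Set.subset_univ _)
          _ = d := hβuniv
    · have hμS : μ S = lam S + d := by rw [← hμdec, Measure.add_apply, hαS]
      have hνS : ν S = lam S := by
        rw [← hνdec, Measure.add_apply, hβS, add_zero]
      have : μ S - ν S = d := by
        rw [hμS, hνS, ENNReal.add_sub_cancel_left (measure_ne_top lam _)]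
      calc d = μ S - ν S := this.symm
        _ ≤ max (μ S - ν S) (ν S - μ S) := le_max_left _ _
        _ ≤ _ := le_iSup₂ (f := fun A (_ : MeasurableSet A) => max (μ A - ν A) (ν A - μ A)) S hS
  rw [hsup]
  have hdiag : Measurable (fun x : E => (x, x)) := measurable_id.prodMk measurable_id
  apply le_antisymm
  · -- construct a coupling with cost ≤ d
    by_cases hd0 : d = 0
    · -- μ = ν, diagonal coupling
      set π : Measure (E × E) := μ.map (fun x => (x, x)) with hπ
      have hα0 : α = 0 := Measure.measure_univ_eq_zero.1 hd0
      have hβ0 : β = 0 := Measure.measure_univ_eq_zero.1 (hβuniv.trans hd0)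
      have hμν : μ = ν := by rw [← hμdec, ← hνdec, hα0, hβ0]
      have hmem : π.map Prod.fst = μ ∧ π.map Prod.snd = ν := by
        constructor
        · rw [hπ, Measure.map_map measurable_fst hdiag,
            show ((Prod.fst ∘ fun x : E => (x, x)) : E → E) = id from rfl, Measure.map_id]
        · rw [hπ, Measure.map_map measurable_snd hdiag, ← hμν,
            show ((Prod.snd ∘ fun x : E => (x, x)) : E → E) = id from rfl, Measure.map_id]
      refine le_trans (iInf_le _ ⟨π, hmem⟩) ?_
      show π {z : E × E | z.1 ≠ z.2} ≤ d
      rw [hπ, Measure.map_apply hdiag tv_measurable_offdiag]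
      simp
    · have hd1 : d⁻¹ * d = 1 := ENNReal.inv_mul_cancel hd0 hd_ne_top
      set π : Measure (E × E) := lam.map (fun x => (x, x)) + d⁻¹ • (α.prod β) with hπ
      have hfst : π.map Prod.fst = μ := by
        rw [hπ, Measure.map_add _ _ measurable_fst, Measure.map_smul,
          Measure.map_map measurable_fst hdiag, Measure.map_fst_prod, hβuniv]
        rw [show ((Prod.fst ∘ fun x : E => (x, x)) : E → E) = id from rfl, Measure.map_id,
          smul_smul, hd1, one_smul, hμdec]
      have hsnd : π.map Prod.snd = ν := by
        rw [hπ, Measure.map_add _ _ measurable_snd, Measure.map_smul,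
          Measure.map_map measurable_snd hdiag, Measure.map_snd_prod, ← hd]
        rw [show ((Prod.snd ∘ fun x : E => (x, x)) : E → E) = id from rfl, Measure.map_id,
          smul_smul, hd1, one_smul, hνdec]
      refine le_trans (iInf_le _ ⟨π, hfst, hsnd⟩) ?_
      show π {z : E × E | z.1 ≠ z.2} ≤ d
      rw [hπ, Measure.add_apply, Measure.map_apply hdiag tv_measurable_offdiag]
      have : (fun x : E => (x, x)) ⁻¹' {z : E × E | z.1 ≠ z.2} = ∅ := by
        ext x; simp
      rw [this, measure_empty, zero_add, Measure.smul_apply, smul_eq_mul]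
      calc d⁻¹ * α.prod β {z : E × E | z.1 ≠ z.2}
          ≤ d⁻¹ * α.prod β Set.univ := by
            exact mul_le_mul_right (measure_mono (Set.subset_univ _)) _
        _ = d⁻¹ * (d * d) := by
            rw [← Set.univ_prod_univ, Measure.prod_prod, hβuniv, ← hd]
        _ = d := by rw [← mul_assoc, hd1, one_mul]
  · rw [← hsup]
    refine le_iInf fun π => iSup₂_le fun A hA => ?_
    exact max_le (tv_coupling_lower μ ν π.1 π.2.1 π.2.2 hA)
      (tv_coupling_lower' μ ν π.1 π.2.1 π.2.2 hA)
end

section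
/- (Optimality of the Wasserstein coupling) Let E be a complete separable (Polish) metric space with its Borel σ-algebra and let μ ≠ ν be probability measures on E. Let (μ−ν)⁺ and (μ−ν)⁻ denote the positive and negative parts in the Jordan–Hahn decomposition of the signed measure μ − ν, and set μ∧ν = μ − (μ−ν)⁺. Define the probability measure π on E × E by π(dx,dy) = (μ∧ν)(dx) δ_x(dy) + (μ−ν)⁺(dx)(μ−ν)⁻(dy) / (μ−ν)⁻(E) (the first term is the image of μ∧ν under the diagonal map x ↦ (x,x)). Then π is a coupling of μ and ν, and π({(x,y) : x ≠ y}) = sup_{A measurable} |μ(A) − ν(A)|; in particular π attains the infimum of π'({x ≠ y}) over all couplings π' of μ and ν. -/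
/-!
The Jordan parts of `μ - ν` are the truncated differences `μ - ν` and `ν - μ`, and
`μ + (ν - μ) = ν + (μ - ν)`. Off the diagonal the coupling only charges the normalized product
of these mutually singular parts, so it gives `{x ≠ y}` the mass `(μ - ν)(E)`, which is
`μ(Sᶜ) - ν(Sᶜ)` for a Hahn set `S` and dominates every `|μ(A) - ν(A)|`. Conversely, for any
coupling `π'`, `{x ∈ A} ⊆ {y ∈ A} ∪ {x ≠ y}` gives `μ(A) ≤ ν(A) + π'{x ≠ y}`.
-/

open MeasureTheory Set

namespace MeasureTheory.Measure

variable {α : Type*} [MeasurableSpace α]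

section Sub

variable {μ ν : Measure α} [IsFiniteMeasure μ] [IsFiniteMeasure ν]

theorem add_sub_eq_add_sub_swap : μ + (ν - μ) = ν + (μ - ν) := by
  rw [← toSignedMeasure_eq_toSignedMeasure_iff, toSignedMeasure_add, toSignedMeasure_add,
    add_comm ν.toSignedMeasure]
  exact sub_eq_sub_iff_add_eq_add.mp sub_toSignedMeasure_eq_toSignedMeasure_sub

theorem sub_sub_add_sub_swap : μ - (μ - ν) + (ν - μ) = ν := by
  calc μ - (μ - ν) + (ν - μ) = μ - (μ - ν) + (ν - μ) + (μ - ν) - (μ - ν) :=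
        Measure.add_sub_cancel.symm
    _ = μ + (ν - μ) - (μ - ν) := by rw [add_right_comm, sub_add_cancel_of_le sub_le]
    _ = ν := by rw [add_sub_eq_add_sub_swap, Measure.add_sub_cancel]

theorem apply_add_sub_swap_apply (A : Set α) : μ A + (ν - μ) A = ν A + (μ - ν) A := by
  rw [← add_apply, add_sub_eq_add_sub_swap, add_apply]

theorem apply_sub_apply_le_sub_apply (A : Set α) : μ A - ν A ≤ (μ - ν) A := by
  rw [tsub_le_iff_left, ← apply_add_sub_swap_apply]
  exact le_self_add

theorem sub_apply_univ_eq_sub_swap_apply_univ (h : μ univ = ν univ) :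
    (μ - ν) univ = (ν - μ) univ := by
  have := apply_add_sub_swap_apply (μ := μ) (ν := ν) univ
  rw [h] at this
  exact ((ENNReal.add_right_inj (measure_ne_top ν univ)).mp this).symm

theorem iSup_max_sub_eq_sub_apply_univ (h : μ univ = ν univ) :
    ⨆ (A : Set α) (_ : MeasurableSet A), max (μ A - ν A) (ν A - μ A) = (μ - ν) univ := by
  refine le_antisymm (iSup₂_le fun A _ => max_le ?_ ?_) ?_
  · exact (apply_sub_apply_le_sub_apply A).trans (measure_mono (subset_univ A))
  · rw [sub_apply_univ_eq_sub_swap_apply_univ h]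
    exact (apply_sub_apply_le_sub_apply A).trans (measure_mono (subset_univ A))
  · obtain ⟨s, hs⟩ := exists_isHahnDecomposition μ ν
    have hμν : (μ - ν) univ = (μ - ν) sᶜ := by
      rw [← measure_add_measure_compl hs.measurableSet,
        sub_apply_eq_zero_of_isHahnDecomposition hs, zero_add]
    have hνμ : (ν - μ) sᶜ = 0 := sub_apply_eq_zero_of_isHahnDecomposition hs.compl
    have hsc : μ sᶜ - ν sᶜ = (μ - ν) sᶜ := by
      refine ENNReal.sub_eq_of_eq_add_rev (measure_ne_top ν sᶜ) ?_
      rw [← apply_add_sub_swap_apply, hνμ, add_zero]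
    calc (μ - ν) univ = μ sᶜ - ν sᶜ := hμν.trans hsc.symm
      _ ≤ max (μ sᶜ - ν sᶜ) (ν sᶜ - μ sᶜ) := le_max_left _ _
      _ ≤ ⨆ (A : Set α) (_ : MeasurableSet A), max (μ A - ν A) (ν A - μ A) :=
          le_iSup₂ (f := fun A (_ : MeasurableSet A) => max (μ A - ν A) (ν A - μ A)) sᶜ
            hs.measurableSet.compl

end Sub

-- In `ℝ≥0∞`, `0⁻¹ = ∞`; but then `μ s = 0` as well.
theorem inv_measure_univ_mul_measure_univ_mul (μ : Measure α) [IsFiniteMeasure μ]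
    (s : Set α) : (μ univ)⁻¹ * (μ univ * μ s) = μ s :=
  ENNReal.inv_mul_cancel_left' (fun h0 => measure_mono_null (subset_univ s) h0)
    (fun htop => absurd htop (measure_ne_top μ univ))

section Prod

variable {β : Type*} [MeasurableSpace β] {μ : Measure α} {ν : Measure β}

theorem map_fst_inv_smul_prod [IsFiniteMeasure μ] [SFinite ν] (h : μ univ = ν univ) :
    ((ν univ)⁻¹ • μ.prod ν).map Prod.fst = μ := by
  ext s
  rw [Measure.map_smul, map_fst_prod, smul_apply, smul_apply, smul_eq_mul, smul_eq_mul, ← h,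
    inv_measure_univ_mul_measure_univ_mul]

theorem map_snd_inv_smul_prod [SFinite μ] [IsFiniteMeasure ν] (h : μ univ = ν univ) :
    ((ν univ)⁻¹ • μ.prod ν).map Prod.snd = ν := by
  ext s
  rw [Measure.map_smul, map_snd_prod, smul_apply, smul_apply, smul_eq_mul, smul_eq_mul, h,
    inv_measure_univ_mul_measure_univ_mul]

end Prod

theorem MutuallySingular.prod_apply_ne {μ ν : Measure α} [SFinite μ] [SFinite ν]
    (h : μ ⟂ₘ ν) : μ.prod ν {z | z.1 ≠ z.2} = μ univ * ν univ := by
  obtain ⟨t, ht, hμt, hνt⟩ := h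
  have hsub : tᶜ ×ˢ t ⊆ {z : α × α | z.1 ≠ z.2} := fun z hz heq => hz.1 (heq ▸ hz.2)
  refine le_antisymm ?_ ?_
  · rw [← Measure.prod_prod, univ_prod_univ]
    exact measure_mono (subset_univ _)
  · calc μ univ * ν univ = μ tᶜ * ν t := by
          rw [← measure_add_measure_compl ht, hμt, zero_add, ← measure_add_measure_compl ht,
            hνt, add_zero]
      _ = μ.prod ν (tᶜ ×ˢ t) := (Measure.prod_prod _ _).symm
      _ ≤ μ.prod ν {z | z.1 ≠ z.2} := measure_mono hsub

theorem map_diag_apply_ne [MeasurableEq α] (μ : Measure α) :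
    μ.map (fun x => (x, x)) {z : α × α | z.1 ≠ z.2} = 0 := by
  have hne : MeasurableSet {z : α × α | z.1 ≠ z.2} :=
    (measurableSet_eq_fun measurable_fst measurable_snd).compl
  rw [map_apply (by fun_prop) hne]
  simp

theorem measure_preimage_le_add_measure_ne {β γ : Type*} [MeasurableSpace β] (m : Measure β)
    (f g : β → γ) (A : Set γ) : m (f ⁻¹' A) ≤ m (g ⁻¹' A) + m {z | f z ≠ g z} := by
  refine (measure_mono fun z hz => ?_).trans (measure_union_le _ _)
  by_cases hfg : f z = g z
  · exact Or.inl (by rwa [mem_preimage, ← hfg])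
  · exact Or.inr hfg

theorem iSup_max_sub_le_of_map_fst_of_map_snd {μ ν : Measure α} {π : Measure (α × α)}
    (hfst : π.map Prod.fst = μ) (hsnd : π.map Prod.snd = ν) :
    ⨆ (A : Set α) (_ : MeasurableSet A), max (μ A - ν A) (ν A - μ A) ≤
      π {z | z.1 ≠ z.2} := by
  subst hfst hsnd
  refine iSup₂_le fun A hA => max_le ?_ ?_
  all_goals rw [map_apply measurable_fst hA, map_apply measurable_snd hA, tsub_le_iff_left]
  · exact measure_preimage_le_add_measure_ne π Prod.fst Prod.snd A
  · simpa only [ne_comm] using measure_preimage_le_add_measure_ne π Prod.snd Prod.fst A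

/-- `μ - (μ - ν)` is the minimum `μ ∧ ν`. -/
noncomputable def maximalCoupling (μ ν : Measure α) : Measure (α × α) :=
  (μ - (μ - ν)).map (fun x => (x, x)) + ((ν - μ) univ)⁻¹ • (μ - ν).prod (ν - μ)

section Coupling

variable {μ ν : Measure α} [IsFiniteMeasure μ] [IsFiniteMeasure ν]

theorem map_fst_maximalCoupling (h : μ univ = ν univ) :
    (maximalCoupling μ ν).map Prod.fst = μ := by
  rw [maximalCoupling, Measure.map_add _ _ measurable_fst,
    map_map measurable_fst (by fun_prop),
    map_fst_inv_smul_prod (sub_apply_univ_eq_sub_swap_apply_univ (μ := μ) (ν := ν) h),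
    Function.comp_def, map_id']
  exact sub_add_cancel_of_le sub_le

theorem map_snd_maximalCoupling (h : μ univ = ν univ) :
    (maximalCoupling μ ν).map Prod.snd = ν := by
  rw [maximalCoupling, Measure.map_add _ _ measurable_snd,
    map_map measurable_snd (by fun_prop),
    map_snd_inv_smul_prod (sub_apply_univ_eq_sub_swap_apply_univ (μ := μ) (ν := ν) h),
    Function.comp_def, map_id']
  exact sub_sub_add_sub_swap

theorem maximalCoupling_apply_ne [MeasurableEq α] (h : μ univ = ν univ) :
    maximalCoupling μ ν {z | z.1 ≠ z.2} = (μ - ν) univ := by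
  rw [maximalCoupling, add_apply, map_diag_apply_ne, zero_add, smul_apply, smul_eq_mul,
    mutually_singular_measure_sub.prod_apply_ne, sub_apply_univ_eq_sub_swap_apply_univ h]
  exact inv_measure_univ_mul_measure_univ_mul _ _

end Coupling

end MeasureTheory.Measure

theorem wasserstein_coupling_optimal_general {E : Type*} [MetricSpace E]
    [TopologicalSpace.SeparableSpace E] [MeasurableSpace E] [BorelSpace E]
    (μ ν : Measure E) [IsProbabilityMeasure μ] [IsProbabilityMeasure ν] :
    let η := μ.toSignedMeasure - ν.toSignedMeasure
    let ηp := η.toJordanDecomposition.posPart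
    let ηm := η.toJordanDecomposition.negPart
    let π : Measure (E × E) :=
      (μ - ηp).map (fun x => (x, x)) + (ηm Set.univ)⁻¹ • (ηp.prod ηm)
    π.map Prod.fst = μ ∧ π.map Prod.snd = ν ∧
      (π {z : E × E | z.1 ≠ z.2} =
        ⨆ (A : Set E) (_ : MeasurableSet A), max (μ A - ν A) (ν A - μ A)) ∧
      ∀ π' : Measure (E × E), π'.map Prod.fst = μ → π'.map Prod.snd = ν →
        π {z : E × E | z.1 ≠ z.2} ≤ π' {z : E × E | z.1 ≠ z.2} := by
  intro η ηp ηm π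
  have hπ : π = Measure.maximalCoupling μ ν := by
    simp only [π, ηp, ηm, η, Measure.toJordanDecomposition_toSignedMeasure_sub,
      Measure.jordanDecompositionOfToSignedMeasureSub_posPart,
      Measure.jordanDecompositionOfToSignedMeasureSub_negPart]
    rfl
  have h : μ Set.univ = ν Set.univ := by simp
  rw [hπ, Measure.maximalCoupling_apply_ne h, ← Measure.iSup_max_sub_eq_sub_apply_univ h]
  exact ⟨Measure.map_fst_maximalCoupling h, Measure.map_snd_maximalCoupling h, rfl,
    fun _ => Measure.iSup_max_sub_le_of_map_fst_of_map_snd⟩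

/-- **Optimality of the Wasserstein coupling.** Let `μ ≠ ν` be probability measures on a
Polish space, let `(μ−ν)⁺`, `(μ−ν)⁻` be the Jordan–Hahn positive and negative parts of the
signed measure `μ − ν`, and let `μ∧ν = μ − (μ−ν)⁺`. Then
`π(dx,dy) = (μ∧ν)(dx) δ_x(dy) + (μ−ν)⁺(dx)(μ−ν)⁻(dy)/(μ−ν)⁻(E)` is a coupling of `μ` and
`ν` satisfying `π({x ≠ y}) = sup_A |μ(A) − ν(A)|`, and it minimizes `π'({x ≠ y})` over all
couplings `π'` of `μ` and `ν`. -/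
theorem wasserstein_coupling_optimal {E : Type*} [MetricSpace E] [CompleteSpace E]
    [TopologicalSpace.SeparableSpace E] [MeasurableSpace E] [BorelSpace E]
    (μ ν : Measure E) [IsProbabilityMeasure μ] [IsProbabilityMeasure ν] (hμν : μ ≠ ν) :
    let η := μ.toSignedMeasure - ν.toSignedMeasure
    let ηp := η.toJordanDecomposition.posPart
    let ηm := η.toJordanDecomposition.negPart
    let π : Measure (E × E) :=
      (μ - ηp).map (fun x => (x, x)) + (ηm Set.univ)⁻¹ • (ηp.prod ηm)
    π.map Prod.fst = μ ∧ π.map Prod.snd = ν ∧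
      (π {z : E × E | z.1 ≠ z.2} =
        ⨆ (A : Set E) (_ : MeasurableSet A), max (μ A - ν A) (ν A - μ A)) ∧
      ∀ π' : Measure (E × E), π'.map Prod.fst = μ → π'.map Prod.snd = ν →
        π {z : E × E | z.1 ≠ z.2} ≤ π' {z : E × E | z.1 ≠ z.2} :=
  wasserstein_coupling_optimal_general μ ν
end

section
/- (Convergence to the invariant measure via coupling) Let E be a complete separable (Polish) metric space with its Borel σ-algebra, let κ be a Markov kernel from E to E, and let μ be an invariant probability measure for κ (i.e. the measure μκ := ∫ κ(x,·) μ(dx) equals μ). Let ν be a probability measure on E, let π be a coupling of μ and ν, and let Π be a Markov kernel from E × E to E × E such that for every (x,y) ∈ E × E, Π((x,y), ·) is a coupling of κ(x,·) and κ(y,·). Then sup_{A measurable} |νκ(A) − μ(A)| ≤ ∫_{E×E} Π((x,y), {(u,v) : u ≠ v}) dπ(x,y), where νκ(A) := ∫ κ(y,A) ν(dy). -/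
/-!
Both `νκ(A)` and `μ(A) = μκ(A)` are averages over `π` of the coupled kernel `Π`: the first of
`Π((x,y), {v ∈ A})`, the second of `Π((x,y), {u ∈ A})`. The two events differ only off the
diagonal, so their probabilities differ by at most `Π((x,y), {u ≠ v})`, pointwise and hence
after integrating against `π`.
-/

open MeasureTheory ProbabilityTheory

theorem Set.preimage_fst_subset_compl_diagonal_union_preimage_snd {α : Type*} (A : Set α) :
    Prod.fst ⁻¹' A ⊆ (Set.diagonal α)ᶜ ∪ Prod.snd ⁻¹' A := fun w hw => by
  by_cases h : w.1 = w.2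
  · exact Or.inr (show w.2 ∈ A from h ▸ hw)
  · exact Or.inl h

theorem Set.preimage_snd_subset_compl_diagonal_union_preimage_fst {α : Type*} (A : Set α) :
    Prod.snd ⁻¹' A ⊆ (Set.diagonal α)ᶜ ∪ Prod.fst ⁻¹' A := fun w hw => by
  by_cases h : w.1 = w.2
  · exact Or.inr (show w.1 ∈ A from h ▸ hw)
  · exact Or.inl h

section

variable {α β γ δ : Type*} [MeasurableSpace α] [MeasurableSpace β] [MeasurableSpace γ]
  [MeasurableSpace δ]

theorem MeasureTheory.Measure.bind_map_apply_eq_lintegral_of_map_eq {π : Measure α} {f : α → β}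
    (hf : Measurable f) {κ : Kernel β δ} {η : Kernel α γ} {g : γ → δ} (hg : Measurable g)
    (hη : ∀ a, (η a).map g = κ (f a)) {A : Set δ} (hA : MeasurableSet A) :
    ((π.map f).bind κ) A = ∫⁻ a, η a (g ⁻¹' A) ∂π := by
  rw [Measure.bind_apply hA κ.measurable.aemeasurable,
    lintegral_map (κ.measurable_coe hA) hf]
  refine lintegral_congr fun a => ?_
  rw [← hη a, Measure.map_apply hg hA]

theorem ProbabilityTheory.Kernel.lintegral_apply_tsub_le_of_subset_union (π : Measure α)
    (η : Kernel α β) {s t : Set β} (ht : MeasurableSet t) (D : Set β) (hst : s ⊆ D ∪ t) :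
    ∫⁻ a, η a s ∂π - ∫⁻ a, η a t ∂π ≤ ∫⁻ a, η a D ∂π :=
  (lintegral_sub_le _ _ (η.measurable_coe ht)).trans <| lintegral_mono fun _ =>
    tsub_le_iff_right.2 ((measure_mono hst).trans (measure_union_le _ _))

end

theorem total_variation_invariant_le_coupling_general {E : Type*} [MeasurableSpace E]
    (κ : Kernel E E)
    (μ : Measure E) (hinv : μ.bind κ = μ)
    (ν : Measure E)
    (π : Measure (E × E)) (hπ1 : π.map Prod.fst = μ) (hπ2 : π.map Prod.snd = ν)
    (Pi : Kernel (E × E) (E × E))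
    (hPi : ∀ p : E × E, (Pi p).map Prod.fst = κ p.1 ∧ (Pi p).map Prod.snd = κ p.2) :
    (⨆ (A : Set E) (_ : MeasurableSet A),
        max ((ν.bind κ) A - μ A) (μ A - (ν.bind κ) A)) ≤
      ∫⁻ z, (Pi z) {w : E × E | w.1 ≠ w.2} ∂π := by
  refine iSup₂_le fun A hA => ?_
  have hν : (ν.bind κ) A = ∫⁻ z, Pi z (Prod.snd ⁻¹' A) ∂π := by
    rw [← hπ2]
    exact Measure.bind_map_apply_eq_lintegral_of_map_eq measurable_snd measurable_snd
      (fun z => (hPi z).2) hA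
  have hμ : μ A = ∫⁻ z, Pi z (Prod.fst ⁻¹' A) ∂π := by
    rw [← hinv, ← hπ1]
    exact Measure.bind_map_apply_eq_lintegral_of_map_eq measurable_fst measurable_fst
      (fun z => (hPi z).1) hA
  rw [hν, hμ]
  exact max_le
    (Pi.lintegral_apply_tsub_le_of_subset_union π (measurable_fst hA) _
      (Set.preimage_snd_subset_compl_diagonal_union_preimage_fst A))
    (Pi.lintegral_apply_tsub_le_of_subset_union π (measurable_snd hA) _
      (Set.preimage_fst_subset_compl_diagonal_union_preimage_snd A))

/-- **Convergence to the invariant measure via coupling.** Let `κ` be a Markov kernel on a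
Polish space `E` with invariant probability measure `μ`, let `π` be a coupling of `μ` and a
probability measure `ν`, and let `Pi` be a Markov kernel on `E × E` such that `Π((x,y),·)` is
a coupling of `κ(x,·)` and `κ(y,·)` for every `(x,y)`. Then
`sup_A |νκ(A) − μ(A)| ≤ ∫ Pi((x,y), {u ≠ v}) dπ(x,y)`. -/
theorem total_variation_invariant_le_coupling {E : Type*} [MetricSpace E] [CompleteSpace E]
    [TopologicalSpace.SeparableSpace E] [MeasurableSpace E] [BorelSpace E]
    (κ : Kernel E E) [IsMarkovKernel κ]
    (μ : Measure E) [IsProbabilityMeasure μ] (hinv : μ.bind κ = μ)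
    (ν : Measure E) [IsProbabilityMeasure ν]
    (π : Measure (E × E)) (hπ1 : π.map Prod.fst = μ) (hπ2 : π.map Prod.snd = ν)
    (Pi : Kernel (E × E) (E × E)) [IsMarkovKernel Pi]
    (hPi : ∀ p : E × E, (Pi p).map Prod.fst = κ p.1 ∧ (Pi p).map Prod.snd = κ p.2) :
    (⨆ (A : Set E) (_ : MeasurableSet A),
        max ((ν.bind κ) A - μ A) (μ A - (ν.bind κ) A)) ≤
      ∫⁻ z, (Pi z) {w : E × E | w.1 ≠ w.2} ∂π :=
  total_variation_invariant_le_coupling_general κ μ hinv ν π hπ1 hπ2 Pi hPi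
end

section
/- (Ergodicity in total variation implies triviality of time-space harmonic functions) Let E be a measurable space and let (κ_t)_{t ≥ 0} be a semigroup of Markov kernels from E to E (κ_0(x,·) = δ_x and κ_{t+s}(x,A) = ∫ κ_s(y,A) κ_t(x,dy) for all s,t ≥ 0). Assume that for all probability measures μ, ν on E, sup_{A measurable} |μκ_t(A) − νκ_t(A)| → 0 as t → ∞, where μκ_t(A) := ∫ κ_t(x,A) μ(dx). Then every bounded measurable function u : [0,∞) × E → ℝ satisfying u(t,x) = ∫ u(t+s,y) κ_s(x,dy) for all s, t ≥ 0 and all x ∈ E is constant. -/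
/-!
Fix `t ≤ t'`. Harmonicity and the semigroup property write both `u t x` and `u t' x'` as
integrals of the same function `u (t' + s)`, against the laws at time `s` started from
`κ (t' - t) x` and from `δ_{x'}` respectively. Integrals of a function bounded by `C` against two
probability measures differ by at most `2C` times their total variation distance, and this
distance tends to `0` as `s → ∞`.
-/

open MeasureTheory ProbabilityTheory Filter Set
open scoped ENNReal Topology

section TotalVariation

variable {E : Type*} [MeasurableSpace E]

/-- Subtraction in `ℝ≥0∞` truncates; for finite measures the `max` is `|μ A - ν A|`. -/
noncomputable def tvDist (μ ν : Measure E) : ℝ≥0∞ :=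
  ⨆ (A : Set E) (_ : MeasurableSet A), max (μ A - ν A) (ν A - μ A)

theorem tvDist_comm (μ ν : Measure E) : tvDist μ ν = tvDist ν μ := by
  simp only [tvDist, max_comm]

theorem tvDist_le_one (μ ν : Measure E) [IsProbabilityMeasure μ] [IsProbabilityMeasure ν] :
    tvDist μ ν ≤ 1 :=
  iSup₂_le fun _ _ => max_le (tsub_le_self.trans prob_le_one) (tsub_le_self.trans prob_le_one)

theorem measure_le_add_tvDist (μ ν : Measure E) {A : Set E} (hA : MeasurableSet A) :
    μ A ≤ ν A + tvDist μ ν :=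
  tsub_le_iff_left.mp <| le_iSup₂_of_le A hA (le_max_left _ _)

/-- The layer cake formula reduces this to the bound on the superlevel sets `{t < g}`,
which are empty for `t ≥ M`. -/
theorem lintegral_le_lintegral_add_of_measure_le_add {α β : Measure E} {ε : ℝ≥0∞}
    (hε : ∀ A, MeasurableSet A → α A ≤ β A + ε) {g : E → ℝ} (hg : Measurable g) {M : ℝ}
    (hg0 : ∀ x, 0 ≤ g x) (hgM : ∀ x, g x ≤ M) :
    ∫⁻ x, ENNReal.ofReal (g x) ∂α ≤ ∫⁻ x, ENNReal.ofReal (g x) ∂β + ε * ENNReal.ofReal M := by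
  have layer (γ : Measure E) :=
    lintegral_eq_lintegral_meas_lt γ (ae_of_all _ hg0) hg.aemeasurable
  rw [layer α, layer β]
  calc ∫⁻ t in Ioi 0, α {a | t < g a}
      ≤ ∫⁻ t in Ioi 0, (β {a | t < g a} + (Ioc 0 M).indicator (fun _ => ε) t) := by
        refine setLIntegral_mono' measurableSet_Ioi fun t ht => ?_
        by_cases htM : t ≤ M
        · rw [indicator_of_mem (show t ∈ Ioc 0 M from ⟨ht, htM⟩)]
          exact hε _ (measurableSet_lt measurable_const hg)
        · have hempty : {a | t < g a} = ∅ :=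
            eq_empty_of_forall_notMem fun a ha => htM (le_of_lt ha |>.trans (hgM a))
          simp [hempty]
    _ = (∫⁻ t in Ioi 0, β {a | t < g a}) + ε * volume (Ioc 0 M) := by
        rw [lintegral_add_right _ (measurable_const.indicator measurableSet_Ioc),
          lintegral_indicator measurableSet_Ioc, setLIntegral_const,
          Measure.restrict_apply measurableSet_Ioc,
          inter_eq_self_of_subset_left Ioc_subset_Ioi_self]
    _ = _ := by rw [Real.volume_Ioc, sub_zero]

theorem integral_sub_integral_le_of_measure_le_add {α β : Measure E} [IsProbabilityMeasure α]
    [IsProbabilityMeasure β] {ε : ℝ≥0∞} (hε_top : ε ≠ ∞)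
    (hε : ∀ A, MeasurableSet A → α A ≤ β A + ε) {f : E → ℝ} (hf : Measurable f) {C : ℝ}
    (hfC : ∀ x, |f x| ≤ C) :
    ∫ x, f x ∂α - ∫ x, f x ∂β ≤ 2 * C * ε.toReal := by
  obtain ⟨x₀⟩ := nonempty_of_isProbabilityMeasure α
  have hC : 0 ≤ C := (abs_nonneg _).trans (hfC x₀)
  have hf0 (x : E) : 0 ≤ f x + C := by linarith [(abs_le.1 (hfC x)).1]
  have hfM (x : E) : f x + C ≤ 2 * C := by linarith [(abs_le.1 (hfC x)).2]
  have hfi (γ : Measure E) [IsProbabilityMeasure γ] : Integrable f γ :=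
    (integrable_const C).mono' hf.aestronglyMeasurable (ae_of_all _ hfC)
  have hgi (γ : Measure E) [IsProbabilityMeasure γ] : Integrable (fun x => f x + C) γ :=
    (hfi γ).add (integrable_const C)
  have hβ0 : 0 ≤ ∫ x, f x + C ∂β := integral_nonneg hf0
  have key := lintegral_le_lintegral_add_of_measure_le_add hε (hf.add_const C) hf0 hfM
  rw [← ofReal_integral_eq_lintegral_ofReal (hgi α) (ae_of_all _ hf0),
    ← ofReal_integral_eq_lintegral_ofReal (hgi β) (ae_of_all _ hf0),
    ← ENNReal.ofReal_toReal hε_top, ← ENNReal.ofReal_mul ENNReal.toReal_nonneg,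
    ← ENNReal.ofReal_add hβ0 (by positivity), ENNReal.ofReal_le_ofReal_iff (by positivity),
    integral_add (hfi α) (integrable_const C), integral_add (hfi β) (integrable_const C)] at key
  simp only [integral_const, probReal_univ, smul_eq_mul, one_mul] at key
  linarith

theorem abs_integral_sub_integral_le_tvDist (α β : Measure E) [IsProbabilityMeasure α]
    [IsProbabilityMeasure β] {f : E → ℝ} (hf : Measurable f) {C : ℝ} (hfC : ∀ x, |f x| ≤ C) :
    |∫ x, f x ∂α - ∫ x, f x ∂β| ≤ 2 * C * (tvDist α β).toReal := by
  have hd_top : tvDist α β ≠ ∞ := ne_top_of_le_ne_top ENNReal.one_ne_top (tvDist_le_one α β)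
  refine abs_sub_le_iff.2 ⟨?_, ?_⟩
  · exact integral_sub_integral_le_of_measure_le_add hd_top
      (fun _ hA => measure_le_add_tvDist α β hA) hf hfC
  · rw [tvDist_comm] at hd_top ⊢
    exact integral_sub_integral_le_of_measure_le_add hd_top
      (fun _ hA => measure_le_add_tvDist β α hA) hf hfC
end TotalVariation

theorem timeSpace_harmonic_constant_of_TV_ergodic_general {E : Type*} [MeasurableSpace E]
    (κ : ℝ → Kernel E E) (hmk : ∀ t, 0 ≤ t → IsMarkovKernel (κ t))
    (hsemi : ∀ s t, 0 ≤ s → 0 ≤ t → ∀ x, κ (t + s) x = (κ t x).bind (κ s))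
    (hTV : ∀ μ ν : Measure E, IsProbabilityMeasure μ → IsProbabilityMeasure ν →
      Tendsto (fun t : ℝ => ⨆ (A : Set E) (_ : MeasurableSet A),
          max ((μ.bind (κ t)) A - (ν.bind (κ t)) A) ((ν.bind (κ t)) A - (μ.bind (κ t)) A))
        atTop (nhds 0))
    (u : ℝ → E → ℝ) (hu : Measurable (Function.uncurry u))
    (hub : ∃ C, ∀ t x, |u t x| ≤ C)
    (hharm : ∀ s t, 0 ≤ s → 0 ≤ t → ∀ x, u t x = ∫ y, u (t + s) y ∂(κ s x)) :
    ∀ t x t' x', 0 ≤ t → 0 ≤ t' → u t x = u t' x' := by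
  intro t x t' x' ht ht'
  obtain ⟨C, hC⟩ := hub
  wlog htt' : t ≤ t' generalizing t x t' x'
  · exact (this t' x' t x ht' ht (le_of_not_ge htt')).symm
  have hd : 0 ≤ t' - t := sub_nonneg.2 htt'
  have := hmk (t' - t) hd
  have hx (s : ℝ) (hs : 0 ≤ s) : u t x = ∫ y, u (t' + s) y ∂((κ (t' - t) x).bind (κ s)) := by
    rw [hharm (t' - t + s) t (by linarith) ht x, hsemi s (t' - t) hs hd x,
      show t + (t' - t + s) = t' + s by ring]
  have hx' (s : ℝ) (hs : 0 ≤ s) :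
      u t' x' = ∫ y, u (t' + s) y ∂((Measure.dirac x').bind (κ s)) := by
    rw [Measure.dirac_bind (κ s).measurable, hharm s t' hs ht']
  have hbound (s : ℝ) (hs : 0 ≤ s) : |u t x - u t' x'| ≤
      2 * C * (tvDist ((κ (t' - t) x).bind (κ s)) ((Measure.dirac x').bind (κ s))).toReal := by
    have := hmk s hs
    rw [hx s hs, hx' s hs]
    exact abs_integral_sub_integral_le_tvDist _ _ hu.of_uncurry_left (hC _)
  have hlim : Tendsto (fun s => 2 * C *
      (tvDist ((κ (t' - t) x).bind (κ s)) ((Measure.dirac x').bind (κ s))).toReal) atTop (𝓝 0) := by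
    simpa [tvDist] using ((ENNReal.tendsto_toReal ENNReal.zero_ne_top).comp
      (hTV _ _ inferInstance inferInstance)).const_mul (2 * C)
  exact sub_eq_zero.1 <| abs_nonpos_iff.1 <|
    ge_of_tendsto hlim ((eventually_ge_atTop 0).mono hbound)

/-- **Ergodicity in total variation implies triviality of time-space harmonic functions.**
Let `(κ t)_{t ≥ 0}` be a semigroup of Markov kernels on a measurable space `E`. If
`sup_A |μκ_t(A) − νκ_t(A)| → 0` as `t → ∞` for all probability measures `μ`, `ν`, then
every bounded measurable time-space harmonic function `u : [0,∞) × E → ℝ` (i.e. one with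
`u(t,x) = ∫ u(t+s,y) κ_s(x,dy)` for all `s,t ≥ 0` and `x`) is constant. -/
theorem timeSpace_harmonic_constant_of_TV_ergodic {E : Type*} [MeasurableSpace E]
    (κ : ℝ → Kernel E E) (hmk : ∀ t, 0 ≤ t → IsMarkovKernel (κ t))
    (h0 : ∀ x, κ 0 x = Measure.dirac x)
    (hsemi : ∀ s t, 0 ≤ s → 0 ≤ t → ∀ x, κ (t + s) x = (κ t x).bind (κ s))
    (hTV : ∀ μ ν : Measure E, IsProbabilityMeasure μ → IsProbabilityMeasure ν →
      Tendsto (fun t : ℝ => ⨆ (A : Set E) (_ : MeasurableSet A),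
          max ((μ.bind (κ t)) A - (ν.bind (κ t)) A) ((ν.bind (κ t)) A - (μ.bind (κ t)) A))
        atTop (nhds 0))
    (u : ℝ → E → ℝ) (hu : Measurable (Function.uncurry u))
    (hub : ∃ C, ∀ t x, |u t x| ≤ C)
    (hharm : ∀ s t, 0 ≤ s → 0 ≤ t → ∀ x, u t x = ∫ y, u (t + s) y ∂(κ s x)) :
    ∀ t x t' x', 0 ≤ t → 0 ≤ t' → u t x = u t' x' :=
  timeSpace_harmonic_constant_of_TV_ergodic_general κ hmk hsemi hTV u hu hub hharm
end

section
/- (Log-Harnack inequality from the dimension-free Harnack inequality with power) Let κ be a Markov kernel from ℝ^d to ℝ^d and let c ≥ 0 be a constant (in the paper c = K/(2(1 − e^{−Kt}))). Suppose that for every p > 1, every bounded measurable f : ℝ^d → [0,∞), and all x, y ∈ ℝ^d, (∫ f dκ(x,·))^p ≤ (∫ f^p dκ(y,·)) · exp( p c |x − y|² / (p − 1) ). Then for every bounded measurable f : ℝ^d → ℝ with f ≥ 1 and all x, y ∈ ℝ^d, ∫ log f dκ(x,·) ≤ log( ∫ f dκ(y,·) ) + c |x − y|². -/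
/-!
Apply the Harnack inequality to the `p`-th root `f ^ (1/p)`, which is bounded, measurable and
`≥ 1`. Since `log f = p · log f ^ (1/p)`, Jensen's inequality for the concave logarithm and the
Harnack inequality give
`∫ log f dκ(x,·) ≤ p · log ∫ f ^ (1/p) dκ(x,·) ≤ log ∫ f dκ(y,·) + p c |x − y|² / (p − 1)`,
and `p / (p − 1) → 1` as `p → ∞`.
-/

open MeasureTheory ProbabilityTheory Filter Topology Real

section

variable {α : Type*} [MeasurableSpace α] {μ : Measure α} [IsProbabilityMeasure μ]

theorem integral_log_le_log_integral {g : α → ℝ} (hg : Integrable g μ)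
    (hg1 : ∀ᵐ z ∂μ, 1 ≤ g z) : ∫ z, log (g z) ∂μ ≤ log (∫ z, g z ∂μ) := by
  have hlog : Integrable (fun z => log (g z)) μ :=
    hg.mono (measurable_log.comp_aemeasurable hg.aemeasurable).aestronglyMeasurable
      (hg1.mono fun z hz => by
        rw [norm_of_nonneg (log_nonneg hz), norm_of_nonneg (zero_le_one.trans hz)]
        exact log_le_self (zero_le_one.trans hz))
  have hconcave : ConcaveOn ℝ (Set.Ici 1) log :=
    strictConcaveOn_log_Ioi.concaveOn.subset (fun _ hx => zero_lt_one.trans_le (Set.mem_Ici.1 hx)) (convex_Ici 1)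
  exact hconcave.le_map_integral (continuousOn_log.mono fun x hx => (zero_lt_one.trans_le hx).ne')
    isClosed_Ici hg1 hg hlog

theorem integral_log_le_mul_log_integral_rpow_inv {f : α → ℝ} {p : ℝ} (hp : 0 < p)
    (hf : Integrable (fun z => f z ^ p⁻¹) μ) (hf1 : ∀ᵐ z ∂μ, 1 ≤ f z) :
    ∫ z, log (f z) ∂μ ≤ p * log (∫ z, f z ^ p⁻¹ ∂μ) := by
  have hlog : ∀ᵐ z ∂μ, log (f z) = p * log (f z ^ p⁻¹) := hf1.mono fun z hz => by
    rw [log_rpow (zero_lt_one.trans_le hz), mul_inv_cancel_left₀ hp.ne']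
  rw [integral_congr_ae hlog, integral_const_mul]
  exact mul_le_mul_of_nonneg_left (integral_log_le_log_integral hf
    (hf1.mono fun z hz => one_le_rpow hz (inv_nonneg.2 hp.le))) hp.le

end

theorem log_le_log_add_of_le_mul_exp {a b K : ℝ} (hb : 0 < b) (h : b ≤ a * exp K) :
    log b ≤ log a + K := by
  have ha : 0 < a := pos_of_mul_pos_left (hb.trans_le h) (exp_pos K).le
  calc log b ≤ log (a * exp K) := log_le_log hb h
    _ = log a + K := by rw [log_mul ha.ne' (exp_ne_zero K), log_exp]

theorem tendsto_mul_div_sub_one_atTop (w : ℝ) :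
    Tendsto (fun p : ℝ => p * w / (p - 1)) atTop (𝓝 w) := by
  have hsplit : (fun p : ℝ => w + w / (p - 1)) =ᶠ[atTop] fun p => p * w / (p - 1) := by
    filter_upwards [eventually_gt_atTop 1] with p hp
    field_simp [(sub_pos.2 hp).ne']
    ring
  have hdecay : Tendsto (fun p : ℝ => w / (p - 1)) atTop (𝓝 0) :=
    tendsto_const_nhds.div_atTop (tendsto_atTop_add_const_right _ (-1) tendsto_id)
  simpa using (tendsto_const_nhds.add hdecay).congr' hsplit

theorem log_harnack_of_power_harnack_general {d : ℕ}
    (κ : Kernel (EuclideanSpace ℝ (Fin d)) (EuclideanSpace ℝ (Fin d))) [IsMarkovKernel κ]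
    (c : ℝ)
    (hHarnack : ∀ p : ℝ, 1 < p → ∀ f : EuclideanSpace ℝ (Fin d) → ℝ,
      Measurable f → (∃ C, ∀ z, |f z| ≤ C) → (∀ z, 0 ≤ f z) →
      ∀ x y, (∫ z, f z ∂(κ x)) ^ p ≤
        (∫ z, f z ^ p ∂(κ y)) * Real.exp (p * c * dist x y ^ 2 / (p - 1))) :
    ∀ f : EuclideanSpace ℝ (Fin d) → ℝ, Measurable f → (∃ C, ∀ z, |f z| ≤ C) →
      (∀ z, 1 ≤ f z) →
      ∀ x y, (∫ z, Real.log (f z) ∂(κ x)) ≤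
        Real.log (∫ z, f z ∂(κ y)) + c * dist x y ^ 2 := by
  rintro f hf ⟨C, hC⟩ hf1 x y
  have hroot : ∀ p : ℝ, 1 < p → ∫ z, log (f z) ∂(κ x) ≤
      log (∫ z, f z ∂(κ y)) + p * (c * dist x y ^ 2) / (p - 1) := by
    intro p hp
    have hp0 : 0 < p := zero_lt_one.trans hp
    have hbound : ∀ z, |f z ^ p⁻¹| ≤ C ^ p⁻¹ := fun z =>
      (abs_rpow_le_abs_rpow _ _).trans (rpow_le_rpow (abs_nonneg _) (hC z) (by positivity))
    have hH := hHarnack p hp _ (hf.pow_const p⁻¹) ⟨_, hbound⟩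
      (fun z => rpow_nonneg (zero_le_one.trans (hf1 z)) _) x y
    have hroot_pow : ∀ z, (f z ^ p⁻¹) ^ p = f z := fun z =>
      rpow_inv_rpow (zero_le_one.trans (hf1 z)) hp0.ne'
    simp only [hroot_pow, mul_assoc] at hH
    have hI : Integrable (fun z => f z ^ p⁻¹) (κ x) :=
      .of_bound (hf.pow_const _).aestronglyMeasurable _ (ae_of_all _ hbound)
    have hI1 : 1 ≤ ∫ z, f z ^ p⁻¹ ∂(κ x) := by
      simpa using integral_mono (integrable_const 1) hI fun z => one_le_rpow (hf1 z) (inv_nonneg.2 hp0.le)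
    calc ∫ z, log (f z) ∂(κ x) ≤ p * log (∫ z, f z ^ p⁻¹ ∂(κ x)) :=
          integral_log_le_mul_log_integral_rpow_inv hp0 hI (ae_of_all _ hf1)
      _ = log ((∫ z, f z ^ p⁻¹ ∂(κ x)) ^ p) := (log_rpow (zero_lt_one.trans_le hI1) p).symm
      _ ≤ _ := log_le_log_add_of_le_mul_exp (rpow_pos_of_pos (zero_lt_one.trans_le hI1) p) hH
  exact ge_of_tendsto ((tendsto_mul_div_sub_one_atTop _).const_add _)
    ((eventually_gt_atTop 1).mono hroot)

/-- **Log-Harnack inequality from the dimension-free Harnack inequality with power.** Let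
`κ` be a Markov kernel on `ℝ^d` and `c ≥ 0`. If for every `p > 1` and every bounded
measurable `f ≥ 0`, `(∫ f dκ(x,·))^p ≤ (∫ f^p dκ(y,·)) · exp(p c |x−y|²/(p−1))` for all
`x, y`, then for every bounded measurable `f ≥ 1`,
`∫ log f dκ(x,·) ≤ log(∫ f dκ(y,·)) + c |x−y|²` for all `x, y`. -/
theorem log_harnack_of_power_harnack {d : ℕ}
    (κ : Kernel (EuclideanSpace ℝ (Fin d)) (EuclideanSpace ℝ (Fin d))) [IsMarkovKernel κ]
    (c : ℝ) (hc : 0 ≤ c)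
    (hHarnack : ∀ p : ℝ, 1 < p → ∀ f : EuclideanSpace ℝ (Fin d) → ℝ,
      Measurable f → (∃ C, ∀ z, |f z| ≤ C) → (∀ z, 0 ≤ f z) →
      ∀ x y, (∫ z, f z ∂(κ x)) ^ p ≤
        (∫ z, f z ^ p ∂(κ y)) * Real.exp (p * c * dist x y ^ 2 / (p - 1))) :
    ∀ f : EuclideanSpace ℝ (Fin d) → ℝ, Measurable f → (∃ C, ∀ z, |f z| ≤ C) →
      (∀ z, 1 ≤ f z) →
      ∀ x y, (∫ z, Real.log (f z) ∂(κ x)) ≤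
        Real.log (∫ z, f z ∂(κ y)) + c * dist x y ^ 2 :=
  log_harnack_of_power_harnack_general κ c hHarnack
end

section
/- (Uniqueness of the quadratic-cost optimal map) Let μ and ν be probability measures on ℝ^d with finite second moments, and assume μ is absolutely continuous with respect to Lebesgue measure. If T₁ and T₂ are measurable maps from ℝ^d to ℝ^d such that for i = 1, 2 the pushforward of μ under T_i equals ν and ∫ |x − T_i x|² dμ(x) = inf_{π ∈ C(μ,ν)} ∫ |x − y|² dπ(x,y), and each T_i is μ-a.e. the gradient of a convex function, then T₁ = T₂ μ-almost everywhere. -/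
/-!
Let `V` be convex with `T₁ = ∇V` `μ`-a.e. Since `T₁` and `T₂` have the same cost and the same
image law, they have the same correlation `∫ ⟪x, Tᵢ x⟫ dμ`. With `V*` the Fenchel conjugate,
`V x + V* (T₁ x) = ⟪x, T₁ x⟫` a.e., and `∫ V* ∘ T₂ dμ = ∫ V* ∘ T₁ dμ`; so the nonnegative
Fenchel–Young gap `V x + V* (T₂ x) - ⟪x, T₂ x⟫` integrates to zero and vanishes a.e. Hence `T₂ x`
is a subgradient of `V` at `x`, which must be `∇V x = T₁ x`.
-/

open MeasureTheory Filter Set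
open scoped RealInnerProductSpace

section Subgradient

variable {E : Type*} [NormedAddCommGroup E] [InnerProductSpace ℝ E] {f : E → ℝ} {x y g : E}

def HasSubgradientAt (f : E → ℝ) (g x : E) : Prop := ∀ z, f x + ⟪g, z - x⟫ ≤ f z

theorem ConvexOn.hasSubgradientAt_of_hasGradientAt [CompleteSpace E] (hf : ConvexOn ℝ univ f)
    (hg : HasGradientAt f g x) : HasSubgradientAt f g x := by
  intro y
  let L : ℝ →ᵃ[ℝ] E := AffineMap.lineMap x y
  have hL : HasDerivAt (f ∘ L) ⟪g, y - x⟫ 0 := by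
    have hfL : HasFDerivAt f (InnerProductSpace.toDual ℝ E g) (L 0) := by
      simpa [L] using hg.hasFDerivAt
    exact hfL.comp_hasDerivAt 0 AffineMap.hasDerivAt_lineMap
  have := (hf.comp_affineMap L).le_slope_of_hasDerivAt (mem_univ 0) (mem_univ 1) zero_lt_one hL
  simp only [slope_def_field, Function.comp_apply, AffineMap.lineMap_apply_one,
    AffineMap.lineMap_apply_zero, sub_zero, div_one, L] at this
  linarith

theorem HasGradientAt.eq_of_hasSubgradientAt [CompleteSpace E] {g' : E}
    (hg : HasGradientAt f g x) (hg' : HasSubgradientAt f g' x) : g = g' := by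
  have hmin : IsLocalMin (fun z => f z - ⟪g', z⟫) x := Eventually.of_forall fun z => by
    have := hg' z
    rw [inner_sub_right] at this
    dsimp only
    linarith
  have := hmin.hasFDerivAt_eq_zero (hg.hasFDerivAt.sub (innerSL ℝ g').hasFDerivAt)
  exact (InnerProductSpace.toDual ℝ E).injective (sub_eq_zero.1 this)

/-- Real-valued, hence equal to the junk value `0` outside `fenchelDomain f`. -/
noncomputable def fenchelConj (f : E → ℝ) (y : E) : ℝ := ⨆ z, ⟪z, y⟫ - f z

def fenchelDomain (f : E → ℝ) : Set E := {y | BddAbove (range fun z => ⟪z, y⟫ - f z)}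

theorem inner_sub_le_fenchelConj (hy : y ∈ fenchelDomain f) (z : E) :
    ⟪z, y⟫ - f z ≤ fenchelConj f y :=
  le_ciSup hy z

theorem hasSubgradientAt_iff_isGreatest :
    HasSubgradientAt f y x ↔ IsGreatest (range fun z => ⟪z, y⟫ - f z) (⟪x, y⟫ - f x) := by
  simp only [HasSubgradientAt, IsGreatest, mem_range, exists_apply_eq_apply, true_and,
    mem_upperBounds, forall_exists_index, forall_apply_eq_imp_iff, inner_sub_right,
    real_inner_comm y]
  exact forall_congr' fun z => by constructor <;> intro h <;> linarith

theorem HasSubgradientAt.mem_fenchelDomain (h : HasSubgradientAt f y x) : y ∈ fenchelDomain f :=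
  ⟨_, (hasSubgradientAt_iff_isGreatest.1 h).2⟩

theorem HasSubgradientAt.fenchelConj_eq (h : HasSubgradientAt f y x) :
    fenchelConj f y = ⟪x, y⟫ - f x :=
  (hasSubgradientAt_iff_isGreatest.1 h).csSup_eq

theorem hasSubgradientAt_of_fenchelConj_le (hy : y ∈ fenchelDomain f)
    (h : fenchelConj f y ≤ ⟪x, y⟫ - f x) : HasSubgradientAt f y x :=
  hasSubgradientAt_iff_isGreatest.2
    ⟨mem_range_self x, forall_mem_range.2 fun z => (inner_sub_le_fenchelConj hy z).trans h⟩

variable [TopologicalSpace.SeparableSpace E] [MeasurableSpace E] [OpensMeasurableSpace E]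

theorem Continuous.measurable_fenchelConj (hf : Continuous f) : Measurable (fenchelConj f) := by
  obtain ⟨S, hSc, hSd⟩ := TopologicalSpace.exists_countable_dense E
  have : Countable S := hSc.to_subtype
  have hS : fenchelConj f = fun y => ⨆ z : S, ⟪(z : E), y⟫ - f z :=
    funext fun y => (hSd.ciSup' (by fun_prop)).symm
  rw [hS]
  exact Measurable.iSup fun z => (measurable_const.inner measurable_id).sub_const _

theorem Continuous.measurableSet_fenchelDomain (hf : Continuous f) :
    MeasurableSet (fenchelDomain f) := by
  obtain ⟨S, hSc, hSd⟩ := TopologicalSpace.exists_countable_dense E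
  have : Countable S := hSc.to_subtype
  have hS : fenchelDomain f = {y | BddAbove (range fun z : S => ⟪(z : E), y⟫ - f z)} := by
    ext y
    change BddAbove _ ↔ BddAbove _
    have hg : Continuous fun z => ⟪z, y⟫ - f z := by fun_prop
    rw [← image_eq_range (fun z => ⟪z, y⟫ - f z), BddAbove, BddAbove, hSd.upperBounds_image hg]
  rw [hS]
  exact measurableSet_bddAbove_range fun z => (measurable_const.inner measurable_id).sub_const _

end Subgradient

section SecondMoments

variable {α E : Type*} {m : MeasurableSpace α} {μ : Measure α} [NormedAddCommGroup E]
  {f g g₁ g₂ : α → E}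

theorem memLp_two_of_lintegral_sq_norm_lt_top (hf : AEStronglyMeasurable f μ)
    (h : ∫⁻ x, ENNReal.ofReal (‖f x‖ ^ 2) ∂μ < ⊤) : MemLp f 2 μ :=
  (memLp_two_iff_integrable_sq_norm hf).2
    ⟨hf.norm.pow 2, (hasFiniteIntegral_iff_ofReal (ae_of_all _ fun _ => sq_nonneg _)).2 h⟩

variable [InnerProductSpace ℝ E]

theorem MeasureTheory.MemLp.integrable_inner (hf : MemLp f 2 μ) (hg : MemLp g 2 μ) :
    Integrable (fun x => ⟪f x, g x⟫) μ :=
  (L2.integrable_inner (hf.toLp f) (hg.toLp g)).congr <| by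
    filter_upwards [hf.coeFn_toLp, hg.coeFn_toLp] with x hfx hgx
    rw [hfx, hgx]

theorem integral_norm_sub_sq (hf : MemLp f 2 μ) (hg : MemLp g 2 μ) :
    ∫ x, ‖f x - g x‖ ^ 2 ∂μ =
      ∫ x, ‖f x‖ ^ 2 ∂μ - 2 * ∫ x, ⟪f x, g x⟫ ∂μ + ∫ x, ‖g x‖ ^ 2 ∂μ := by
  have hf2 := (memLp_two_iff_integrable_sq_norm hf.1).1 hf
  have hg2 := (memLp_two_iff_integrable_sq_norm hg.1).1 hg
  have hfg := (hf.integrable_inner hg).const_mul 2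
  simp_rw [norm_sub_sq_real]
  rw [integral_add (f := fun x => ‖f x‖ ^ 2 - 2 * ⟪f x, g x⟫) (hf2.sub hfg) hg2,
    integral_sub hf2 hfg, integral_const_mul]

theorem integral_inner_eq_of_integral_norm_sub_sq_eq [MeasurableSpace E] [OpensMeasurableSpace E]
    (hf : MemLp f 2 μ) (hg₁ : MemLp g₁ 2 μ) (hg₂ : MemLp g₂ 2 μ) (hg₁m : AEMeasurable g₁ μ)
    (hg₂m : AEMeasurable g₂ μ) (hmap : μ.map g₁ = μ.map g₂)
    (h : ∫ x, ‖f x - g₁ x‖ ^ 2 ∂μ = ∫ x, ‖f x - g₂ x‖ ^ 2 ∂μ) :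
    ∫ x, ⟪f x, g₁ x⟫ ∂μ = ∫ x, ⟪f x, g₂ x⟫ ∂μ := by
  have hsq : ∫ x, ‖g₁ x‖ ^ 2 ∂μ = ∫ x, ‖g₂ x‖ ^ 2 ∂μ := by
    have hm : Measurable fun y : E => ‖y‖ ^ 2 := by fun_prop
    rw [← integral_map hg₁m hm.aestronglyMeasurable, hmap,
      integral_map hg₂m hm.aestronglyMeasurable]
  rw [integral_norm_sub_sq hf hg₁, integral_norm_sub_sq hf hg₂, hsq] at h
  linarith

end SecondMoments

section Transport

variable {E : Type*} [NormedAddCommGroup E] [InnerProductSpace ℝ E] [MeasurableSpace E]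
  {μ : Measure E} {V : E → ℝ} {T₁ T₂ : E → E}

theorem integrable_of_ae_hasSubgradientAt [OpensMeasurableSpace E] [IsFiniteMeasure μ]
    [NeZero μ] {T : E → E} (hV : Continuous V) (hsub : ∀ᵐ x ∂μ, HasSubgradientAt V (T x) x)
    (hid : Integrable id μ) (hT : Integrable (fun x => ⟪x, T x⟫) μ) : Integrable V μ := by
  obtain ⟨x₀, hx₀⟩ := hsub.exists
  refine integrable_of_le_of_le (g₁ := fun x => V x₀ + ⟪T x₀, x - x₀⟫)
    (g₂ := fun x => V 0 + ⟪x, T x⟫) hV.aestronglyMeasurable (ae_of_all _ hx₀)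
    (hsub.mono fun x hx => ?_) ?_ ?_
  · have := hx 0
    rw [zero_sub, inner_neg_right, real_inner_comm] at this
    linarith
  · exact (integrable_const _).add ((hid.sub (integrable_const x₀)).const_inner _)
  · exact (integrable_const _).add hT

theorem ae_hasSubgradientAt_of_map_eq_of_integral_inner_le
    [TopologicalSpace.SeparableSpace E] [OpensMeasurableSpace E]
    (hV : Continuous V) (hVint : Integrable V μ) (hT₁ : Measurable T₁) (hT₂ : Measurable T₂)
    (hsub : ∀ᵐ x ∂μ, HasSubgradientAt V (T₁ x) x) (hmap : μ.map T₂ = μ.map T₁)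
    (h₁ : Integrable (fun x => ⟪x, T₁ x⟫) μ) (h₂ : Integrable (fun x => ⟪x, T₂ x⟫) μ)
    (hle : ∫ x, ⟪x, T₁ x⟫ ∂μ ≤ ∫ x, ⟪x, T₂ x⟫ ∂μ) :
    ∀ᵐ x ∂μ, HasSubgradientAt V (T₂ x) x := by
  have hWm := hV.measurable_fenchelConj
  have hW₁ : ∀ᵐ x ∂μ, fenchelConj V (T₁ x) = ⟪x, T₁ x⟫ - V x :=
    hsub.mono fun x hx => hx.fenchelConj_eq
  have hdom₂ : ∀ᵐ x ∂μ, T₂ x ∈ fenchelDomain V := by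
    refine ae_of_ae_map hT₂.aemeasurable (p := (· ∈ fenchelDomain V)) (hmap ▸ ?_)
    exact (ae_map_iff hT₁.aemeasurable hV.measurableSet_fenchelDomain).2 <|
      hsub.mono fun x hx => hx.mem_fenchelDomain
  have hWint₁ : Integrable (fun x => fenchelConj V (T₁ x)) μ :=
    (h₁.sub hVint).congr (hW₁.mono fun x hx => hx.symm)
  have hWint₂ : Integrable (fun x => fenchelConj V (T₂ x)) μ :=
    (integrable_map_measure hWm.aestronglyMeasurable hT₂.aemeasurable).1 <| hmap ▸
      (integrable_map_measure hWm.aestronglyMeasurable hT₁.aemeasurable).2 hWint₁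
  have hWeq : ∫ x, fenchelConj V (T₂ x) ∂μ = ∫ x, fenchelConj V (T₁ x) ∂μ := by
    rw [← integral_map hT₂.aemeasurable hWm.aestronglyMeasurable, hmap,
      integral_map hT₁.aemeasurable hWm.aestronglyMeasurable]
  let gap := fun x => fenchelConj V (T₂ x) - (⟪x, T₂ x⟫ - V x)
  have hgap_nonneg : 0 ≤ᵐ[μ] gap :=
    hdom₂.mono fun x hx => sub_nonneg.2 (inner_sub_le_fenchelConj hx x)
  have hgap_le : ∫ x, gap x ∂μ ≤ 0 := by
    change ∫ x, (fenchelConj V (T₂ x) - (⟪x, T₂ x⟫ - V x)) ∂μ ≤ 0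
    rw [integral_sub (g := fun x => ⟪x, T₂ x⟫ - V x) hWint₂ (h₂.sub hVint), hWeq,
      integral_congr_ae hW₁, integral_sub h₁ hVint, integral_sub h₂ hVint]
    linarith
  have hgap : gap =ᵐ[μ] 0 :=
    (integral_eq_zero_iff_of_nonneg_ae hgap_nonneg (hWint₂.sub (h₂.sub hVint))).1
      (hgap_le.antisymm (integral_nonneg_of_ae hgap_nonneg))
  filter_upwards [hgap, hdom₂] with x hx hxdom
  exact hasSubgradientAt_of_fenchelConj_le hxdom (sub_eq_zero.1 hx).le

end Transport

theorem optimal_map_unique_general {d : ℕ}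
    (μ ν : Measure (EuclideanSpace ℝ (Fin d)))
    [IsProbabilityMeasure μ]
    (hμ2 : ∫⁻ x, ENNReal.ofReal (‖x‖ ^ 2) ∂μ < ⊤)
    (hν2 : ∫⁻ x, ENNReal.ofReal (‖x‖ ^ 2) ∂ν < ⊤)
    (T₁ T₂ : EuclideanSpace ℝ (Fin d) → EuclideanSpace ℝ (Fin d))
    (hT₁m : Measurable T₁) (hT₂m : Measurable T₂)
    (hT₁push : μ.map T₁ = ν) (hT₂push : μ.map T₂ = ν)
    (hT₁opt : (∫⁻ x, ENNReal.ofReal (‖x - T₁ x‖ ^ 2) ∂μ) =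
      ⨅ π : {π : Measure (EuclideanSpace ℝ (Fin d) × EuclideanSpace ℝ (Fin d)) //
          π.map Prod.fst = μ ∧ π.map Prod.snd = ν},
        ∫⁻ z, ENNReal.ofReal (‖z.1 - z.2‖ ^ 2) ∂π.1)
    (hT₂opt : (∫⁻ x, ENNReal.ofReal (‖x - T₂ x‖ ^ 2) ∂μ) =
      ⨅ π : {π : Measure (EuclideanSpace ℝ (Fin d) × EuclideanSpace ℝ (Fin d)) //
          π.map Prod.fst = μ ∧ π.map Prod.snd = ν},
        ∫⁻ z, ENNReal.ofReal (‖z.1 - z.2‖ ^ 2) ∂π.1)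
    (hT₁grad : ∃ V₁ : EuclideanSpace ℝ (Fin d) → ℝ, ConvexOn ℝ Set.univ V₁ ∧
      ∀ᵐ x ∂μ, HasGradientAt V₁ (T₁ x) x) :
    T₁ =ᵐ[μ] T₂ := by
  obtain ⟨V, hV, hVgrad⟩ := hT₁grad
  have hid : MemLp (fun x => x) 2 μ :=
    memLp_two_of_lintegral_sq_norm_lt_top aestronglyMeasurable_id hμ2
  have hν : MemLp (fun y => y) 2 ν :=
    memLp_two_of_lintegral_sq_norm_lt_top aestronglyMeasurable_id hν2
  have h₁ : MemLp T₁ 2 μ := (hT₁push ▸ hν).comp_of_map hT₁m.aemeasurable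
  have h₂ : MemLp T₂ 2 μ := (hT₂push ▸ hν).comp_of_map hT₂m.aemeasurable
  have hcost : ∫ x, ‖x - T₁ x‖ ^ 2 ∂μ = ∫ x, ‖x - T₂ x‖ ^ 2 ∂μ := by
    rw [integral_eq_lintegral_of_nonneg_ae (ae_of_all _ fun _ => sq_nonneg _) (by fun_prop),
      integral_eq_lintegral_of_nonneg_ae (ae_of_all _ fun _ => sq_nonneg _) (by fun_prop),
      hT₁opt, hT₂opt]
  have hcorr := integral_inner_eq_of_integral_norm_sub_sq_eq hid h₁ h₂ hT₁m.aemeasurable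
    hT₂m.aemeasurable (hT₁push.trans hT₂push.symm) hcost
  have hsub₁ : ∀ᵐ x ∂μ, HasSubgradientAt V (T₁ x) x :=
    hVgrad.mono fun x hx => hV.hasSubgradientAt_of_hasGradientAt hx
  have hVc : Continuous V := continuousOn_univ.1 (hV.continuousOn isOpen_univ)
  have hVint := integrable_of_ae_hasSubgradientAt hVc hsub₁ (hid.integrable one_le_two)
    (hid.integrable_inner h₁)
  have hsub₂ := ae_hasSubgradientAt_of_map_eq_of_integral_inner_le hVc hVint hT₁m hT₂m hsub₁
    (hT₂push.trans hT₁push.symm) (hid.integrable_inner h₁) (hid.integrable_inner h₂) hcorr.le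
  filter_upwards [hVgrad, hsub₂] with x hx₁ hx₂
  exact hx₁.eq_of_hasSubgradientAt hx₂

/-- **Uniqueness of the quadratic-cost optimal map.** Let `μ`, `ν` be probability measures
on `ℝ^d` with finite second moments, `μ` absolutely continuous w.r.t. Lebesgue measure. If
`T₁`, `T₂` are measurable maps pushing `μ` to `ν`, each attaining the optimal quadratic
transportation cost `inf_{π ∈ C(μ,ν)} ∫ |x − y|² dπ`, and each being `μ`-a.e. the gradient
of a convex function, then `T₁ = T₂` `μ`-almost everywhere. -/
theorem optimal_map_unique {d : ℕ}
    (μ ν : Measure (EuclideanSpace ℝ (Fin d)))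
    [IsProbabilityMeasure μ] [IsProbabilityMeasure ν]
    (hμ2 : ∫⁻ x, ENNReal.ofReal (‖x‖ ^ 2) ∂μ < ⊤)
    (hν2 : ∫⁻ x, ENNReal.ofReal (‖x‖ ^ 2) ∂ν < ⊤)
    (hac : μ ≪ volume)
    (T₁ T₂ : EuclideanSpace ℝ (Fin d) → EuclideanSpace ℝ (Fin d))
    (hT₁m : Measurable T₁) (hT₂m : Measurable T₂)
    (hT₁push : μ.map T₁ = ν) (hT₂push : μ.map T₂ = ν)
    (hT₁opt : (∫⁻ x, ENNReal.ofReal (‖x - T₁ x‖ ^ 2) ∂μ) =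
      ⨅ π : {π : Measure (EuclideanSpace ℝ (Fin d) × EuclideanSpace ℝ (Fin d)) //
          π.map Prod.fst = μ ∧ π.map Prod.snd = ν},
        ∫⁻ z, ENNReal.ofReal (‖z.1 - z.2‖ ^ 2) ∂π.1)
    (hT₂opt : (∫⁻ x, ENNReal.ofReal (‖x - T₂ x‖ ^ 2) ∂μ) =
      ⨅ π : {π : Measure (EuclideanSpace ℝ (Fin d) × EuclideanSpace ℝ (Fin d)) //
          π.map Prod.fst = μ ∧ π.map Prod.snd = ν},
        ∫⁻ z, ENNReal.ofReal (‖z.1 - z.2‖ ^ 2) ∂π.1)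
    (hT₁grad : ∃ V₁ : EuclideanSpace ℝ (Fin d) → ℝ, ConvexOn ℝ Set.univ V₁ ∧
      ∀ᵐ x ∂μ, HasGradientAt V₁ (T₁ x) x)
    (hT₂grad : ∃ V₂ : EuclideanSpace ℝ (Fin d) → ℝ, ConvexOn ℝ Set.univ V₂ ∧
      ∀ᵐ x ∂μ, HasGradientAt V₂ (T₂ x) x) :
    T₁ =ᵐ[μ] T₂ :=
  optimal_map_unique_general μ ν hμ2 hν2 T₁ T₂ hT₁m hT₂m hT₁push hT₂push hT₁opt hT₂opt hT₁grad
end
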